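/- arXiv:1905.12299 — 6 statements merged into one kernel-verified Lean document; each statement's English description precedes it below -/
import Mathlib

section
/- There exists a finite set 𝒮 of subgroups of G such that for every x ∈ M, the stabilizer subgroup G_x = {g ∈ G : g•x = x} is conjugate to a member of 𝒮, i.e., there exist H ∈ 𝒮 and h ∈ G with G_x = h H h⁻¹. In particular, M decomposes into finitely many orbit types. -/
/-!
A point of `N` fixed by `g` lies in `N ∩ g • N`, so `setInfDist N (g • N) = 0`; by the
assumption on `N`, `g` then has bounded length. Hence the stabilizers of points of `N` all lie
in one finite set of group elements, so there are finitely many of them, and every stabilizer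
is conjugate to one of these because the translates of `N` cover `M`.
-/

open Pointwise

/-- The infimum distance between two subsets of a metric space. -/
noncomputable def setInfDist {M : Type*} [MetricSpace M] (A B : Set M) : ℝ :=
  sInf (Set.image2 dist A B)

theorem setInfDist_le_dist {M : Type*} [MetricSpace M] {A B : Set M} {a b : M}
    (ha : a ∈ A) (hb : b ∈ B) : setInfDist A B ≤ dist a b :=
  csInf_le ⟨0, by rintro _ ⟨_, -, _, -, rfl⟩; exact dist_nonneg⟩ (Set.mem_image2_of_mem ha hb)

theorem setInfDist_smul_nonpos_of_mem_stabilizer {G M : Type*} [Group G] [MetricSpace M]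
    [MulAction G M] {N : Set M} {y : M} {g : G} (hy : y ∈ N)
    (hg : g ∈ MulAction.stabilizer G y) : setInfDist N (g • N) ≤ 0 := by
  have hgy : y ∈ g • N := ⟨y, hy, hg⟩
  simpa using setInfDist_le_dist hy hgy

theorem Subgroup.finite_setOf_coe_subset {G : Type*} [Group G] {F : Set G} (hF : F.Finite) :
    {H : Subgroup G | (H : Set G) ⊆ F}.Finite :=
  Set.Finite.of_finite_image (hF.finite_subsets.subset (Set.image_subset_iff.2 fun _ => id))
    SetLike.coe_injective.injOn

theorem MulAction.coe_stabilizer_smul {G M : Type*} [Group G] [MulAction G M] (g : G) (y : M) :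
    (stabilizer G (g • y) : Set G) = (fun k => g * k * g⁻¹) '' (stabilizer G y : Set G) := by
  rw [stabilizer_smul_eq_stabilizer_map_conj, Subgroup.coe_map]
  rfl

theorem finitely_many_orbit_types_general
    {G : Type*} [Group G] {M : Type*} [MetricSpace M] [MulAction G M]
    (l : G → ℝ)
    (hlproper : ∀ R : ℝ, {g : G | l g ≤ R}.Finite)
    (N : Set M)
    (hass : ∀ C : ℝ, 0 < C → ∃ R : ℝ, 0 < R ∧ ∀ g : G, R ≤ l g → C ≤ setInfDist N (g • N))
    (hcover : (⋃ g : G, g • N) = Set.univ) :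
    ∃ 𝒮 : Set (Subgroup G), 𝒮.Finite ∧
      ∀ x : M, ∃ H ∈ 𝒮, ∃ h : G,
        (MulAction.stabilizer G x : Set G) = (fun g => h * g * h⁻¹) '' (H : Set G) := by
  obtain ⟨R, -, hR⟩ := hass 1 one_pos
  have hstab : ∀ y ∈ N, (MulAction.stabilizer G y : Set G) ⊆ {g : G | l g ≤ R} := by
    intro y hy g hg
    by_contra hlong
    have hfar := hR g ((not_le.1 hlong).le)
    have hnear := setInfDist_smul_nonpos_of_mem_stabilizer hy hg
    linarith
  refine ⟨(MulAction.stabilizer G ·) '' N, ?_, fun x => ?_⟩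
  · exact (Subgroup.finite_setOf_coe_subset (hlproper R)).subset
      (Set.image_subset_iff.2 hstab)
  · obtain ⟨g, y, hy, rfl⟩ := Set.mem_iUnion.1 (hcover.symm ▸ Set.mem_univ x)
    exact ⟨_, Set.mem_image_of_mem _ hy, g, MulAction.coe_stabilizer_smul g y⟩

/-- Corollary 2.7 of the paper: under Assumption 2.6, there are finitely many
conjugacy classes of stabilizer subgroups, i.e. finitely many orbit types. -/
theorem finitely_many_orbit_types
    {G : Type*} [Group G] {M : Type*} [MetricSpace M] [MulAction G M]
    (hiso : ∀ (g : G) (x y : M), dist (g • x) (g • y) = dist x y)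
    (l : G → ℝ)
    (hl1 : l 1 = 0)
    (hlinv : ∀ g : G, l g⁻¹ = l g)
    (hlmul : ∀ g h : G, l (g * h) ≤ l g + l h)
    (hlproper : ∀ R : ℝ, {g : G | l g ≤ R}.Finite)
    (N : Set M) (hN : N.Nonempty)
    (hass : ∀ C : ℝ, 0 < C → ∃ R : ℝ, 0 < R ∧ ∀ g : G, R ≤ l g → C ≤ setInfDist N (g • N))
    (hcover : (⋃ g : G, g • N) = Set.univ) :
    ∃ 𝒮 : Set (Subgroup G), 𝒮.Finite ∧
      ∀ x : M, ∃ H ∈ 𝒮, ∃ h : G,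
        (MulAction.stabilizer G x : Set G) = (fun g => h * g * h⁻¹) '' (H : Set G) :=
  finitely_many_orbit_types_general l hlproper N hass hcover
end

section
/- There exists a natural number C such that for every x ∈ M, the stabilizer subgroup G_x = {g ∈ G : g•x = x} is finite and has cardinality at most C. -/
/-!
A group element fixing a point of `N` makes `N` and `g • N` meet, so their infimum distance is
`0`; by the separation assumption `l g` is then bounded, and properness of `l` leaves only finitely
many such `g`. Every point of `M` is a translate `h • n` of a point of `N`, and its stabilizer is
conjugate to that of `n`, so the same bound holds everywhere.
-/

open Pointwise

open MulAction

theorem setInfDist_eq_zero_of_inter_nonempty {M : Type*} [MetricSpace M] {A B : Set M}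
    (h : (A ∩ B).Nonempty) : setInfDist A B = 0 := by
  obtain ⟨x, hxA, hxB⟩ := h
  have hnonneg : ∀ r ∈ Set.image2 dist A B, 0 ≤ r := by
    rintro r ⟨a, -, b, -, rfl⟩
    exact dist_nonneg
  refine le_antisymm ?_ (Real.sInf_nonneg hnonneg)
  exact csInf_le ⟨0, hnonneg⟩ ⟨x, hxA, x, hxB, dist_self x⟩

theorem stabilizer_subset_setOf_le_of_mem {G M : Type*} [Group G] [MetricSpace M]
    [MulAction G M] (l : G → ℝ) {N : Set M} {C R : ℝ} (hC : 0 < C)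
    (hR : ∀ g : G, R ≤ l g → C ≤ setInfDist N (g • N)) {n : M} (hn : n ∈ N) :
    (stabilizer G n : Set G) ⊆ {g | l g ≤ R} := by
  intro g hg
  show l g ≤ R
  by_contra! hlarge
  have hmeet : (N ∩ g • N).Nonempty := ⟨n, hn, n, hn, hg⟩
  have hsep := hR g hlarge.le
  rw [setInfDist_eq_zero_of_inter_nonempty hmeet] at hsep
  linarith

theorem finite_stabilizer_and_card_le_of_iUnion_smul_eq_univ {G α : Type*} [Group G]
    [MulAction G α] {N : Set α} (hcover : ⋃ g : G, g • N = Set.univ) {S : Set G}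
    (hS : S.Finite) (hN : ∀ n ∈ N, (stabilizer G n : Set G) ⊆ S) (x : α) :
    (stabilizer G x : Set G).Finite ∧ Nat.card (stabilizer G x) ≤ Nat.card S := by
  obtain ⟨h, n, hn, rfl⟩ : ∃ h : G, ∃ n ∈ N, h • n = x := by
    have hx : x ∈ ⋃ g : G, g • N := hcover ▸ Set.mem_univ x
    simpa only [Set.mem_iUnion, Set.mem_smul_set] using hx
  have hconj : stabilizer G n ≃* stabilizer G (h • n) := stabilizerEquivStabilizer rfl
  have : Finite (stabilizer G n) := (hS.subset (hN n hn)).to_subtype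
  refine ⟨Set.finite_coe_iff.mp (Finite.of_equiv _ hconj.toEquiv), ?_⟩
  calc Nat.card (stabilizer G (h • n)) = Nat.card (stabilizer G n) := (Nat.card_congr hconj).symm
    _ ≤ Nat.card S := Nat.card_mono hS (hN n hn)

theorem stabilizers_uniformly_finite_general
    {G : Type*} [Group G] {M : Type*} [MetricSpace M] [MulAction G M]
    (l : G → ℝ)
    (hlproper : ∀ R : ℝ, {g : G | l g ≤ R}.Finite)
    (N : Set M)
    (hass : ∀ C : ℝ, 0 < C → ∃ R : ℝ, 0 < R ∧ ∀ g : G, R ≤ l g → C ≤ setInfDist N (g • N))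
    (hcover : (⋃ g : G, g • N) = Set.univ) :
    ∃ C : ℕ, ∀ x : M,
      (MulAction.stabilizer G x : Set G).Finite ∧
        Nat.card (MulAction.stabilizer G x) ≤ C := by
  obtain ⟨R, -, hR⟩ := hass 1 one_pos
  exact ⟨Nat.card {g : G | l g ≤ R}, finite_stabilizer_and_card_le_of_iUnion_smul_eq_univ hcover
    (hlproper R) fun _ hn => stabilizer_subset_setOf_le_of_mem l one_pos hR hn⟩

/-- Under Assumption 2.6 and the covering condition, the stabilizers of points of `M`
are finite, of uniformly bounded cardinality. -/
theorem stabilizers_uniformly_finite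
    {G : Type*} [Group G] {M : Type*} [MetricSpace M] [MulAction G M]
    (hiso : ∀ (g : G) (x y : M), dist (g • x) (g • y) = dist x y)
    (l : G → ℝ)
    (hl1 : l 1 = 0)
    (hlinv : ∀ g : G, l g⁻¹ = l g)
    (hlmul : ∀ g h : G, l (g * h) ≤ l g + l h)
    (hlproper : ∀ R : ℝ, {g : G | l g ≤ R}.Finite)
    (N : Set M) (hN : N.Nonempty)
    (hass : ∀ C : ℝ, 0 < C → ∃ R : ℝ, 0 < R ∧ ∀ g : G, R ≤ l g → C ≤ setInfDist N (g • N))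
    (hcover : (⋃ g : G, g • N) = Set.univ) :
    ∃ C : ℕ, ∀ x : M,
      (MulAction.stabilizer G x : Set G).Finite ∧
        Nat.card (MulAction.stabilizer G x) ≤ C :=
  stabilizers_uniformly_finite_general l hlproper N hass hcover
end

section
/- For every R > 0 there exists a natural number C_R such that for every x ∈ M, the set {y ∈ G•x : d(x,y) ≤ R} (the intersection of the orbit of x with the closed ball of radius R around x) is finite and has cardinality at most C_R; in particular the bound is independent of the point x. -/
/-!
Pick `h` with `x ∈ h • N`. If `g • x` lies within `R` of `x`, then translating back by `h⁻¹`
shows that `N` and `(h⁻¹ * g * h) • N` come within `R` of each other, and by hypothesis only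
finitely many elements `k` bring `k • N` that close to `N`. Hence `g = h * k * h⁻¹` for one of
these finitely many `k`, a set which does not depend on `x`.
-/

open Pointwise

section IsometricAction

variable {G : Type*} [Group G] {M : Type*} [MetricSpace M] [MulAction G M]

theorem setInfDist_conj_smul_le_dist_smul
    (hiso : ∀ (g : G) (x y : M), dist (g • x) (g • y) = dist x y)
    {N : Set M} {h : G} {x : M} (hx : x ∈ h • N) (g : G) :
    setInfDist N ((h⁻¹ * g * h) • N) ≤ dist x (g • x) := by
  have hx' : h⁻¹ • x ∈ N := Set.mem_smul_set_iff_inv_smul_mem.mp hx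
  have hgx : h⁻¹ • g • x ∈ (h⁻¹ * g * h) • N :=
    ⟨h⁻¹ • x, hx', by simp only [smul_smul, mul_assoc, mul_inv_cancel, mul_one]⟩
  calc setInfDist N ((h⁻¹ * g * h) • N) ≤ dist (h⁻¹ • x) (h⁻¹ • g • x) :=
        setInfDist_le_dist hx' hgx
    _ = dist x (g • x) := hiso _ _ _

theorem orbit_inter_closedBall_subset_image_conj
    (hiso : ∀ (g : G) (x y : M), dist (g • x) (g • y) = dist x y)
    {N : Set M} {h : G} {x : M} (hx : x ∈ h • N) (R : ℝ) :
    {y : M | y ∈ MulAction.orbit G x ∧ dist x y ≤ R} ⊆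
      (fun k : G => (h * k * h⁻¹) • x) '' {k : G | setInfDist N (k • N) ≤ R} := by
  rintro _ ⟨⟨g, rfl⟩, hg⟩
  refine ⟨h⁻¹ * g * h, (setInfDist_conj_smul_le_dist_smul hiso hx g).trans hg, ?_⟩
  simp only [mul_assoc, mul_inv_cancel, mul_one, mul_inv_cancel_left]

theorem finite_setOf_setInfDist_smul_le (l : G → ℝ)
    (hlproper : ∀ R : ℝ, {g : G | l g ≤ R}.Finite) (N : Set M)
    (hass : ∀ C : ℝ, 0 < C → ∃ R : ℝ, 0 < R ∧ ∀ g : G, R ≤ l g → C ≤ setInfDist N (g • N))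
    (R : ℝ) : {g : G | setInfDist N (g • N) ≤ R}.Finite := by
  obtain ⟨R', -, hR'⟩ := hass (|R| + 1) (by positivity)
  refine (hlproper R').subset fun g (hg : setInfDist N (g • N) ≤ R) => show l g ≤ R' from ?_
  by_contra! hlg
  linarith [hR' g hlg.le, le_abs_self R]

end IsometricAction

theorem orbit_inter_ball_uniformly_finite_general
    {G : Type*} [Group G] {M : Type*} [MetricSpace M] [MulAction G M]
    (hiso : ∀ (g : G) (x y : M), dist (g • x) (g • y) = dist x y)
    (l : G → ℝ)
    (hlproper : ∀ R : ℝ, {g : G | l g ≤ R}.Finite)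
    (N : Set M)
    (hass : ∀ C : ℝ, 0 < C → ∃ R : ℝ, 0 < R ∧ ∀ g : G, R ≤ l g → C ≤ setInfDist N (g • N))
    (hcover : (⋃ g : G, g • N) = Set.univ) :
    ∀ R : ℝ, 0 < R → ∃ C : ℕ, ∀ x : M,
      {y : M | y ∈ MulAction.orbit G x ∧ dist x y ≤ R}.Finite ∧
        Nat.card ↥{y : M | y ∈ MulAction.orbit G x ∧ dist x y ≤ R} ≤ C := by
  intro R _
  have hF := finite_setOf_setInfDist_smul_le l hlproper N hass R
  refine ⟨Nat.card {g : G | setInfDist N (g • N) ≤ R}, fun x => ?_⟩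
  obtain ⟨h, hx⟩ := Set.mem_iUnion.mp (hcover.symm ▸ Set.mem_univ x)
  have hsub := orbit_inter_closedBall_subset_image_conj hiso hx R
  exact ⟨(hF.image _).subset hsub,
    (Nat.card_mono (hF.image _) hsub).trans (Nat.card_image_le hF)⟩

/-- Corollary 2.8 of the paper: orbits do not accumulate, uniformly in the base point.
For every `R > 0` there is a bound `C_R`, independent of `x`, on the number of points of
the orbit of `x` lying within distance `R` of `x`. -/
theorem orbit_inter_ball_uniformly_finite
    {G : Type*} [Group G] {M : Type*} [MetricSpace M] [MulAction G M]
    (hiso : ∀ (g : G) (x y : M), dist (g • x) (g • y) = dist x y)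
    (l : G → ℝ)
    (hl1 : l 1 = 0)
    (hlinv : ∀ g : G, l g⁻¹ = l g)
    (hlmul : ∀ g h : G, l (g * h) ≤ l g + l h)
    (hlproper : ∀ R : ℝ, {g : G | l g ≤ R}.Finite)
    (N : Set M) (hN : N.Nonempty)
    (hass : ∀ C : ℝ, 0 < C → ∃ R : ℝ, 0 < R ∧ ∀ g : G, R ≤ l g → C ≤ setInfDist N (g • N))
    (hcover : (⋃ g : G, g • N) = Set.univ) :
    ∀ R : ℝ, 0 < R → ∃ C : ℕ, ∀ x : M,
      {y : M | y ∈ MulAction.orbit G x ∧ dist x y ≤ R}.Finite ∧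
        Nat.card ↥{y : M | y ∈ MulAction.orbit G x ∧ dist x y ≤ R} ≤ C :=
  orbit_inter_ball_uniformly_finite_general hiso l hlproper N hass hcover
end

section
/- Let (X,d) be a metric space, R > 0, L a positive natural number, and S ⊆ X a subset such that for every z ∈ S the set {w ∈ S : d(w,z) ≤ R} has cardinality at most L (counting z itself). Then S can be partitioned into L subsets S₁, …, S_L (some possibly empty) such that any two distinct points lying in the same subset S_i are at distance strictly greater than R from each other. -/
/-!
Join two points of `S` when they are at distance at most `R`. Every vertex of this graph has
fewer than `L` neighbors, and the color classes of a proper `L`-coloring are the required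
pieces. For a possibly infinite graph `G` of degree `< L` such a coloring comes from Zorn's
lemma: independent sets of `G □ K_L` are partial proper colorings, and a maximal one colors
every vertex, since an uncolored vertex would meet each of the `L` colors at a distinct
neighbor.
-/

namespace SimpleGraph

variable {V : Type*} (G : SimpleGraph V)

theorem exists_maximal_isIndepSet : ∃ s, Maximal G.IsIndepSet s :=
  zorn_subset {s | G.IsIndepSet s} fun c hc hchain =>
    ⟨⋃₀ c, (Set.pairwise_sUnion hchain.directedOn).2 hc, fun _ => Set.subset_sUnion_of_mem⟩

variable {G} {β : Type*}

theorem exists_mem_of_maximal_isIndepSet_boxProd_top {s : Set (V × β)}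
    (hs : Maximal (G □ ⊤).IsIndepSet s) {v : V}
    (hv : (G.neighborSet v).encard < ENat.card β) : ∃ i, (v, i) ∈ s := by
  by_contra! hvs
  have blocked : ∀ i, ∃ p ∈ s, (G □ ⊤).Adj (v, i) p := by
    intro i
    by_contra! hfree
    refine hs.not_prop_of_ssuperset (Set.ssubset_insert (hvs i)) ?_
    refine (Set.pairwise_insert_of_notMem (hvs i)).2 ⟨hs.prop, fun p hp => ?_⟩
    exact ⟨hfree p hp, fun h => hfree p hp h.symm⟩
  choose p hps hadj using blocked
  have hp : ∀ i, G.Adj v (p i).1 ∧ (p i).2 = i := by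
    intro i
    rcases hadj i with ⟨h, hi⟩ | ⟨-, hv⟩
    · exact ⟨h, hi.symm⟩
    · exact (hvs (p i).2 (by rw [show v = (p i).1 from hv]; exact hps i)).elim
  have hinj : Function.Injective fun i => (p i).1 := by
    intro i j hij
    by_contra hne
    refine hs.prop (hps i) (hps j) (fun h => hne ?_) (Or.inr ⟨?_, hij⟩)
    · rw [← (hp i).2, h, (hp j).2]
    · simpa [(hp i).2, (hp j).2] using hne
  refine hv.not_ge (hinj.encard_range.trans (Set.encard_le_encard ?_))
  rintro _ ⟨i, rfl⟩
  exact (hp i).1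

theorem nonempty_coloring_of_forall_encard_neighborSet_lt
    (h : ∀ v, (G.neighborSet v).encard < ENat.card β) : Nonempty (G.Coloring β) := by
  obtain ⟨s, hs⟩ := (G □ (⊤ : SimpleGraph β)).exists_maximal_isIndepSet
  choose c hc using fun v => exists_mem_of_maximal_isIndepSet_boxProd_top hs (h v)
  exact ⟨Coloring.mk c fun {v w} hvw hcol =>
    hs.prop (hc v) (hc w) (fun h => hvw.ne (congrArg Prod.fst h)) (Or.inl ⟨hvw, hcol⟩)⟩

end SimpleGraph

section Proximity

variable {X : Type*} [MetricSpace X]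

def proximityGraph (S : Set X) (R : ℝ) : SimpleGraph S where
  Adj w z := w ≠ z ∧ dist w z ≤ R
  symm := ⟨fun w z h => ⟨h.1.symm, dist_comm (w : X) z ▸ h.2⟩⟩
  loopless := ⟨fun _ h => h.1 rfl⟩

theorem image_val_neighborSet_proximityGraph (S : Set X) (R : ℝ) (z : S) :
    Subtype.val '' (proximityGraph S R).neighborSet z = {w ∈ S | dist w z ≤ R} \ {(z : X)} := by
  ext w
  simp [proximityGraph, Subtype.dist_eq, Subtype.ext_iff, dist_comm, eq_comm, and_comm]

theorem encard_neighborSet_proximityGraph_lt {S : Set X} {R : ℝ} (hR : 0 ≤ R) {L : ℕ} (z : S)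
    (hfin : {w ∈ S | dist w z ≤ R}.Finite) (hcard : Nat.card {w ∈ S | dist w z ≤ R} ≤ L) :
    ((proximityGraph S R).neighborSet z).encard < L := by
  rw [← Subtype.val_injective.encard_image, image_val_neighborSet_proximityGraph]
  calc ({w ∈ S | dist w z ≤ R} \ {(z : X)}).encard < {w ∈ S | dist w z ≤ R}.encard :=
        hfin.sdiff.encard_lt_encard (Set.sdiff_singleton_ssubset.2 ⟨z.2, by simpa using hR⟩)
    _ ≤ L := by rwa [← hfin.cast_ncard_eq, ← Nat.card_coe_set_eq, Nat.cast_le]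

end Proximity

theorem partition_into_separated_pieces_general
    {X : Type*} [MetricSpace X] (R : ℝ) (hR : 0 < R) (L : ℕ)
    (S : Set X)
    (hS : ∀ z ∈ S, {w ∈ S | dist w z ≤ R}.Finite ∧ Nat.card ↥{w ∈ S | dist w z ≤ R} ≤ L) :
    ∃ P : Fin L → Set X,
      (∀ i, P i ⊆ S) ∧
      (⋃ i, P i) = S ∧
      (∀ i j, i ≠ j → Disjoint (P i) (P j)) ∧
      (∀ i, ∀ w ∈ P i, ∀ z ∈ P i, w ≠ z → R < dist w z) := by
  obtain ⟨C⟩ := (proximityGraph S R).nonempty_coloring_of_forall_encard_neighborSet_lt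
    (β := Fin L) fun z => by
      simpa using encard_neighborSet_proximityGraph_lt hR.le z (hS z z.2).1 (hS z z.2).2
  refine ⟨fun i => Subtype.val '' (C ⁻¹' {i}), fun i => Subtype.coe_image_subset S _, ?_,
    fun i j hij => ?_, ?_⟩
  · ext x
    simp
  · exact (Set.disjoint_image_iff Subtype.val_injective).2
      ((Set.disjoint_singleton.2 hij).preimage C)
  · rintro i _ ⟨w, hw, rfl⟩ _ ⟨z, hz, rfl⟩ hwz
    by_contra! hle
    exact C.valid ⟨fun h => hwz (congrArg Subtype.val h), hle⟩ (hw.trans hz.symm)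

/-- A uniformly locally finite subset of a metric space (each point of `S` has at most `L`
points of `S`, itself included, within distance `R`) can be partitioned into `L` pieces,
each of which is `R`-separated. -/
theorem partition_into_separated_pieces
    {X : Type*} [MetricSpace X] (R : ℝ) (hR : 0 < R) (L : ℕ) (hL : 0 < L)
    (S : Set X)
    (hS : ∀ z ∈ S, {w ∈ S | dist w z ≤ R}.Finite ∧ Nat.card ↥{w ∈ S | dist w z ≤ R} ≤ L) :
    ∃ P : Fin L → Set X,
      (∀ i, P i ⊆ S) ∧
      (⋃ i, P i) = S ∧
      (∀ i j, i ≠ j → Disjoint (P i) (P j)) ∧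
      (∀ i, ∀ w ∈ P i, ∀ z ∈ P i, w ≠ z → R < dist w z) :=
  partition_into_separated_pieces_general R hR L S hS
end

section
/- Let (X, μ) be a measure space, G a countable group acting on X by measurable maps, and χ : X → ℝ a measurable function such that ∑_{g∈G} χ(g⁻¹•x)² = 1 for every x ∈ X. Then for every s ∈ L²(X, μ), the function (x,g) ↦ χ(g⁻¹•x)·s(x) belongs to L²(X × G, μ ⊗ count), where count is the counting measure on G, and the resulting linear map j : L²(X, μ) → L²(X × G, μ ⊗ count), j(s)(x,g) = χ(g⁻¹•x)s(x), is an isometry. -/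
/-!
Write `j s (x, g) = φ (x, g) • s x` with `φ (x, g) = χ (g⁻¹ • x)`. By Tonelli, the `p`-th power of
the `Lᵖ`-norm of `j s` is `∫ x, (∫ g, ‖φ (x, g)‖ᵖ) ‖s x‖ᵖ dμ`, and the inner integral is `1`
whenever the fibrewise weights `φ (x, ·)` have unit `Lᵖ`-norm; for the counting measure and `p = 2`
this is the partition-of-unity condition `∑_g χ(g⁻¹ • x)² = 1`.
-/

open MeasureTheory

open scoped ENNReal

namespace MeasureTheory

variable {X G 𝕜 E : Type*} [MeasurableSpace X] [MeasurableSpace G] [NormedField 𝕜]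
  [NormedAddCommGroup E] [NormedSpace 𝕜 E] {μ : Measure X} {ν : Measure G} [SFinite ν]
  {p : ℝ≥0∞} {φ : X × G → 𝕜}

theorem eLpNorm_smul_comp_fst_eq (hp0 : p ≠ 0) (hptop : p ≠ ∞)
    (hφ : AEStronglyMeasurable φ (μ.prod ν))
    (hφp : ∀ᵐ x ∂μ, ∫⁻ g, ‖φ (x, g)‖ₑ ^ p.toReal ∂ν = 1)
    {s : X → E} (hs : AEStronglyMeasurable s μ) :
    eLpNorm (fun q => φ q • s q.1) p (μ.prod ν) = eLpNorm s p μ := by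
  have hφs : AEStronglyMeasurable (fun q : X × G => φ q • s q.1) (μ.prod ν) :=
    hφ.smul (hs.comp_quasiMeasurePreserving Measure.quasiMeasurePreserving_fst)
  have hp : 0 ≤ p.toReal := ENNReal.toReal_nonneg
  rw [eLpNorm_eq_lintegral_rpow_enorm_toReal hp0 hptop,
    eLpNorm_eq_lintegral_rpow_enorm_toReal hp0 hptop,
    lintegral_prod _ (hφs.enorm.pow_const _)]
  congr 1
  refine lintegral_congr_ae (hφp.mono fun x hx => ?_)
  simp_rw [enorm_smul, ENNReal.mul_rpow_of_nonneg _ _ hp]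
  rw [lintegral_mul_const' _ _ (ENNReal.rpow_ne_top_of_nonneg hp enorm_ne_top), hx, one_mul]

theorem MemLp.smul_comp_fst (hp0 : p ≠ 0) (hptop : p ≠ ∞)
    (hφ : AEStronglyMeasurable φ (μ.prod ν))
    (hφp : ∀ᵐ x ∂μ, ∫⁻ g, ‖φ (x, g)‖ₑ ^ p.toReal ∂ν = 1)
    {s : X → E} (hs : MemLp s p μ) :
    MemLp (fun q => φ q • s q.1) p (μ.prod ν) :=
  ⟨hφ.smul (hs.1.comp_quasiMeasurePreserving Measure.quasiMeasurePreserving_fst), by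
    rw [eLpNorm_smul_comp_fst_eq hp0 hptop hφ hφp hs.1]
    exact hs.2⟩

end MeasureTheory

theorem tsum_enorm_ofReal_rpow_two {ι : Type*} {f : ι → ℝ} (h : ∑' i, f i ^ 2 = 1) :
    ∑' i, ‖(f i : ℂ)‖ₑ ^ (2 : ℝ) = 1 := by
  have hf : Summable fun i => f i ^ 2 := by
    by_contra hns
    rw [tsum_eq_zero_of_not_summable hns] at h
    exact zero_ne_one h
  have hsq (r : ℝ) : ‖(r : ℂ)‖ₑ ^ (2 : ℝ) = ENNReal.ofReal (r ^ 2) := by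
    rw [← ofReal_norm, Complex.norm_real,
      ENNReal.ofReal_rpow_of_nonneg (norm_nonneg _) zero_le_two]
    norm_num
  simp_rw [hsq]
  rw [← ENNReal.ofReal_tsum_of_nonneg (fun i => sq_nonneg _) hf, h, ENNReal.ofReal_one]

/-- The isometric embedding `j : L²(X) → L²(X × G)` defined by a cut-off function `χ`
with `∑_g χ(g⁻¹x)² = 1`: for every `s ∈ L²(X)`, the function `(x,g) ↦ χ(g⁻¹x)·s(x)`
is in `L²(X × G)` and has the same `L²`-norm as `s`. -/
theorem cutoff_embedding_isometry
    {X : Type*} [MeasurableSpace X] (μ : Measure X)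
    {G : Type*} [Group G] [Countable G] [MeasurableSpace G] [MeasurableSingletonClass G]
    [MulAction G X] (hact : ∀ g : G, Measurable fun x : X => g • x)
    (χ : X → ℝ) (hχ : Measurable χ)
    (hsum : ∀ x : X, ∑' g : G, (χ (g⁻¹ • x)) ^ 2 = 1) :
    ∀ s : X → ℂ, MemLp s 2 μ →
      MemLp (fun p : X × G => (χ (p.2⁻¹ • p.1) : ℂ) * s p.1) 2 (μ.prod Measure.count) ∧
        eLpNorm (fun p : X × G => (χ (p.2⁻¹ • p.1) : ℂ) * s p.1) 2 (μ.prod Measure.count) =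
          eLpNorm s 2 μ := by
  intro s hs
  have hφ : AEStronglyMeasurable (fun p : X × G => (χ (p.2⁻¹ • p.1) : ℂ))
      (μ.prod Measure.count) :=
    (Complex.measurable_ofReal.comp
      (measurable_from_prod_countable_left fun g => hχ.comp (hact g⁻¹))).aestronglyMeasurable
  have hφp : ∀ᵐ x ∂μ,
      ∫⁻ g : G, ‖(χ (g⁻¹ • x) : ℂ)‖ₑ ^ (2 : ℝ≥0∞).toReal ∂Measure.count = 1 :=
    Filter.Eventually.of_forall fun x => by
      rw [lintegral_count, ENNReal.toReal_ofNat]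
      exact tsum_enorm_ofReal_rpow_two (hsum x)
  exact ⟨hs.smul_comp_fst two_ne_zero ENNReal.ofNat_ne_top hφ hφp,
    eLpNorm_smul_comp_fst_eq two_ne_zero ENNReal.ofNat_ne_top hφ hφp hs.1⟩
end

section
/- Let A be a C*-algebra, S ⊆ A a dense linear subspace, and D : S → A a linear map which is symmetric in the sense that (D a)* v = a* (D v) for all a, v ∈ S. Then for all a, a' ∈ S and b, b' ∈ A with a·b = a'·b', one has (D a)·b = (D a')·b'. -/
/-! Symmetry moves `D` across the inner product: for `v ∈ S`,
`v* ((D a) b) = (D v)* (a b)`, so `x := (D a) b - (D a') b'` satisfies `v* x = 0` for all `v` in the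
dense subspace `S`. By continuity `x* x = 0`, hence `x = 0` by the C*-identity. -/

theorem CStarRing.eq_zero_of_dense_star_mul_eq_zero {E : Type*} [NonUnitalNormedRing E]
    [StarRing E] [CStarRing E] {s : Set E} (hs : Dense s) {x : E}
    (h : ∀ v ∈ s, star v * x = 0) : x = 0 := by
  have hclosed : IsClosed {y : E | star y * x = 0} := isClosed_eq (by fun_prop) continuous_const
  exact (star_mul_self_eq_zero_iff x).mp (hs.induction (P := fun y => star y * x = 0) h hclosed x)

theorem symmetric_extension_wellDefined_general
    {A : Type*} [NormedRing A] [StarRing A] [CStarRing A]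
    [NormedAlgebra ℂ A]
    (S : Submodule ℂ A) (hdense : Dense (S : Set A))
    (D : S →ₗ[ℂ] A)
    (hsym : ∀ a v : S, star (D a) * (v : A) = star (a : A) * D v) :
    ∀ a a' : S, ∀ b b' : A, (a : A) * b = (a' : A) * b' → D a * b = D a' * b' := by
  intro a a' b b' hab
  rw [← sub_eq_zero]
  refine CStarRing.eq_zero_of_dense_star_mul_eq_zero hdense fun v hv => ?_
  have move_D : ∀ (c : S) (d : A), star v * (D c * d) = star (D ⟨v, hv⟩) * (c * d) := by
    intro c d
    have hsym_v : star (D ⟨v, hv⟩) * c = star v * D c := hsym ⟨v, hv⟩ c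
    rw [← mul_assoc, ← hsym_v, mul_assoc]
  rw [mul_sub, move_D, move_D, hab, sub_self]

/-- Well-definedness of the extension `D(ab) := (Da)b`: if `D` is a symmetric linear map
defined on a dense subspace `S` of a C*-algebra `A`, then `a b = a' b'` implies
`(D a) b = (D a') b'`. -/
theorem symmetric_extension_wellDefined
    {A : Type*} [NormedRing A] [StarRing A] [CStarRing A]
    [NormedAlgebra ℂ A] [CompleteSpace A] [StarModule ℂ A]
    (S : Submodule ℂ A) (hdense : Dense (S : Set A))
    (D : S →ₗ[ℂ] A)
    (hsym : ∀ a v : S, star (D a) * (v : A) = star (a : A) * D v) :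
    ∀ a a' : S, ∀ b b' : A, (a : A) * b = (a' : A) * b' → D a * b = D a' * b' :=
  symmetric_extension_wellDefined_general S hdense D hsym
end
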